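/- If the lower Rényi entropy satisfies 0 < H̲₂(μ), then for ν⊗ν-almost every pair ((ω,x),(ω̃,y)), limsup_{n→∞} M_n(x,y)/log n ≤ 2/H̲₂(μ). -/

import Mathlib

open MeasureTheory Filter ProbabilityTheory Set

noncomputable section

/-- The one-sided shift on `ℕ`-indexed sequences. -/
def shiftN {A : Type*} (x : ℕ → A) : ℕ → A := fun n => x (n + 1)

/-- The `k`-cylinder determined by the word `w`. -/
def cyl {A : Type*} (k : ℕ) (w : Fin k → A) : Set (ℕ → A) := {x | ∀ i : Fin k, x (i : ℕ) = w i}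

/-- Membership in the σ-algebra `F₀ⁿ(X)` generated by the `n`-cylinders:
the sets determined by the first `n` coordinates. -/
def cylAlg {A : Type*} (n : ℕ) (B : Set (ℕ → A)) : Prop :=
  ∃ s : Set (Fin n → A), B = {x | (fun i : Fin n => x (i : ℕ)) ∈ s}

/-- Length of the longest common substring of `x` and `y` within the first `n` symbols:
`M_n(x,y) = max{m : x_{i+k} = y_{j+k}, k = 1,…,m, for some 0 ≤ i,j ≤ n-m}`. -/
def Mstat {A : Type*} (x y : ℕ → A) (n : ℕ) : ℕ :=
  sSup {m | ∃ i j : ℕ, i + m ≤ n ∧ j + m ≤ n ∧ ∀ k, 1 ≤ k → k ≤ m → x (i + k) = y (j + k)}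

/-- Lower Rényi entropy `H̲₂(μ) = liminf_k (-1/k) log Σ_{C_k} μ(C_k)²`. -/
def H2low (N : ℕ) (μ : Measure (ℕ → Fin N)) : ℝ :=
  liminf (fun k : ℕ =>
    Real.log (∑ w : Fin k → Fin N, (μ (cyl k w)).toReal ^ 2) / (-(k : ℝ))) atTop

/-- Upper Rényi entropy `H̄₂(μ) = limsup_k (-1/k) log Σ_{C_k} μ(C_k)²`. -/
def H2up (N : ℕ) (μ : Measure (ℕ → Fin N)) : ℝ :=
  limsup (fun k : ℕ =>
    Real.log (∑ w : Fin k → Fin N, (μ (cyl k w)).toReal ^ 2) / (-(k : ℝ))) atTop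

/-- `h₀ = liminf_k (-1/k) log ∫_Ω max_{C_k} μ_ω(C_k) dℙ`. -/
def h0lim {Ω : Type*} [MeasurableSpace Ω] (N : ℕ) (P : Measure Ω)
    (κ : Kernel Ω (ℕ → Fin N)) : ℝ :=
  liminf (fun k : ℕ =>
    Real.log (∫ ω, (⨆ w : Fin k → Fin N, ((κ ω) (cyl k w)).toReal) ∂P) / (-(k : ℝ))) atTop

/-!
Only the marginal `μ` matters: under `ν ⊗ ν` the pair `(x, y)` has law `μ ⊗ μ`, and `μ` is
shift invariant. A union bound over the `(n + 1)²` pairs of starting positions gives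
`(μ ⊗ μ){M_n ≥ m} ≤ (n + 1)² Σ_{C_m} μ(C_m)²`, since by shift invariance each block of length `m`
is `μ`-distributed. For `α > 2 / H̲₂(μ)` pick `b < H̲₂(μ)` with `α b > 2`; along `n = 2^(s+1)`,
`m = ⌈α s log 2⌉` the bound is `O(2^((2 - α b) s))`, summable, so by Borel–Cantelli
`M_{2^(s+1)} ≤ α s log 2` eventually, and since `M_n` is monotone in `n` this gives
`limsup M_n / log n ≤ α`. Then let `α ↓ 2 / H̲₂(μ)` along a sequence.
-/

open Topology Real

section Shift

variable {A : Type*}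

lemma measurable_shiftN [MeasurableSpace A] : Measurable (shiftN (A := A)) :=
  measurable_pi_lambda _ fun n => measurable_pi_apply (n + 1)

lemma shiftN_iterate_apply (x : ℕ → A) (r n : ℕ) : shiftN^[r] x n = x (n + r) := by
  induction r generalizing x with
  | zero => rfl
  | succ r ih => rw [Function.iterate_succ_apply, ih]; rfl

lemma measurableSet_cyl [MeasurableSpace A] [MeasurableSingletonClass A] (k : ℕ) (w : Fin k → A) :
    MeasurableSet (cyl k w) := by
  simp only [cyl, Set.ofPred_forall]
  exact .iInter fun i => (measurableSet_singleton (w i)).preimage (measurable_pi_apply (i : ℕ))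

lemma pairwise_disjoint_cyl (k : ℕ) :
    Pairwise fun w w' : Fin k → A => Disjoint (cyl k w) (cyl k w') :=
  fun _ _ hww' => Set.disjoint_left.mpr fun _ hx hx' =>
    hww' (funext fun i => (hx i).symm.trans (hx' i))

end Shift

section Collision

variable {A : Type*} [Fintype A] [MeasurableSpace A]

/-- The probability that two independent `μ`-samples agree on their first `k` symbols. -/
def collisionProb (μ : Measure (ℕ → A)) (k : ℕ) : ℝ :=
  ∑ w : Fin k → A, μ.real (cyl k w) ^ 2

lemma collisionProb_nonneg (μ : Measure (ℕ → A)) (k : ℕ) : 0 ≤ collisionProb μ k :=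
  Finset.sum_nonneg fun _ _ => sq_nonneg _

lemma collisionProb_le_one [MeasurableSingletonClass A] (μ : Measure (ℕ → A))
    [IsProbabilityMeasure μ] (k : ℕ) : collisionProb μ k ≤ 1 :=
  calc collisionProb μ k ≤ ∑ w : Fin k → A, μ.real (cyl k w) :=
        Finset.sum_le_sum fun _ _ =>
          pow_le_of_le_one measureReal_nonneg measureReal_le_one two_ne_zero
    _ = μ.real (⋃ w, cyl k w) :=
        (measureReal_iUnion_fintype (pairwise_disjoint_cyl k) (measurableSet_cyl k)).symm
    _ ≤ 1 := measureReal_le_one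

end Collision

lemma H2low_eq_liminf_collisionProb (N : ℕ) (μ : Measure (ℕ → Fin N)) :
    H2low N μ = liminf (fun k : ℕ => log (collisionProb μ k) / -(k : ℝ)) atTop :=
  rfl

lemma collisionProb_eventually_le_exp {N : ℕ} {μ : Measure (ℕ → Fin N)} [IsProbabilityMeasure μ]
    {b : ℝ} (hb : b < H2low N μ) : ∀ᶠ k : ℕ in atTop, collisionProb μ k ≤ exp (-(b * k)) := by
  rw [H2low_eq_liminf_collisionProb] at hb
  have hbdd : IsBoundedUnder (· ≥ ·) atTop fun k : ℕ => log (collisionProb μ k) / -(k : ℝ) :=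
    isBoundedUnder_of ⟨0, fun k => div_nonneg_of_nonpos
      (log_nonpos (collisionProb_nonneg μ k) (collisionProb_le_one μ k)) (by simp)⟩
  filter_upwards [eventually_lt_of_lt_liminf hb hbdd, eventually_gt_atTop 0] with k hk hk0
  rcases (collisionProb_nonneg μ k).eq_or_lt with h0 | hpos
  · rw [← h0]; positivity
  · rw [lt_div_iff_of_neg (by simpa using hk0)] at hk
    rw [← exp_log hpos, exp_le_exp]
    linarith

section LongestMatch

variable {A : Type*}

lemma Mstat_set_bddAbove (x y : ℕ → A) (n : ℕ) :
    BddAbove {m | ∃ i j : ℕ, i + m ≤ n ∧ j + m ≤ n ∧ ∀ k, 1 ≤ k → k ≤ m → x (i + k) = y (j + k)} :=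
  ⟨n, fun _ ⟨_, _, hi, _⟩ => by omega⟩

lemma Mstat_set_nonempty (x y : ℕ → A) (n : ℕ) :
    {m | ∃ i j : ℕ, i + m ≤ n ∧ j + m ≤ n ∧ ∀ k, 1 ≤ k → k ≤ m → x (i + k) = y (j + k)}.Nonempty :=
  ⟨0, 0, 0, by omega, by omega, fun _ _ _ => by omega⟩

lemma Mstat_mono (x y : ℕ → A) : Monotone (Mstat x y) := fun _ _ hnn' =>
  csSup_le_csSup (Mstat_set_bddAbove x y _) (Mstat_set_nonempty x y _)
    fun _ ⟨i, j, hi, hj, hxy⟩ => ⟨i, j, by omega, by omega, hxy⟩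

lemma exists_match_of_le_Mstat {x y : ℕ → A} {n m : ℕ} (h : m ≤ Mstat x y n) :
    ∃ i j : ℕ, i + m ≤ n ∧ j + m ≤ n ∧ ∀ k, 1 ≤ k → k ≤ m → x (i + k) = y (j + k) := by
  unfold Mstat at h
  obtain ⟨i, j, hi, hj, hxy⟩ := Nat.sSup_mem (Mstat_set_nonempty x y n) (Mstat_set_bddAbove x y n)
  exact ⟨i, j, by omega, by omega, fun k hk hkm => hxy k hk (by omega)⟩

-- `Mstat` compares `x (i + 1), …, x (i + m)`, hence the iterate `i + 1`.
lemma setOf_le_Mstat_subset (n m : ℕ) :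
    {p : (ℕ → A) × (ℕ → A) | m ≤ Mstat p.1 p.2 n} ⊆
      ⋃ ijw : Fin (n + 1) × Fin (n + 1) × (Fin m → A),
        (shiftN^[ijw.1 + 1] ⁻¹' cyl m ijw.2.2) ×ˢ (shiftN^[ijw.2.1 + 1] ⁻¹' cyl m ijw.2.2) := by
  rintro ⟨x, y⟩ hp
  obtain ⟨i, j, hi, hj, hxy⟩ := exists_match_of_le_Mstat hp
  refine Set.mem_iUnion.mpr ⟨(⟨i, by omega⟩, ⟨j, by omega⟩, fun t => x (i + (t + 1))), ?_, ?_⟩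
  · intro t
    rw [shiftN_iterate_apply]
    exact congrArg x (Nat.add_left_comm _ _ _)
  · intro t
    rw [shiftN_iterate_apply, Nat.add_left_comm]
    exact (hxy (t + 1) (by omega) (by omega)).symm

end LongestMatch

lemma measureReal_le_Mstat_le {A : Type*} [Fintype A] [MeasurableSpace A]
    [MeasurableSingletonClass A] {μ : Measure (ℕ → A)} [IsFiniteMeasure μ]
    (hμ : MeasurePreserving shiftN μ μ) (n m : ℕ) :
    (μ.prod μ).real {p | m ≤ Mstat p.1 p.2 n} ≤ (n + 1) ^ 2 * collisionProb μ m := by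
  have hpre : ∀ (r : ℕ) (w : Fin m → A), μ.real (shiftN^[r] ⁻¹' cyl m w) = μ.real (cyl m w) :=
    fun r w => by
      simp only [measureReal_def,
        (hμ.iterate r).measure_preimage (measurableSet_cyl m w).nullMeasurableSet]
  calc (μ.prod μ).real {p | m ≤ Mstat p.1 p.2 n}
      ≤ ∑ ijw : Fin (n + 1) × Fin (n + 1) × (Fin m → A),
          (μ.prod μ).real ((shiftN^[ijw.1 + 1] ⁻¹' cyl m ijw.2.2) ×ˢ
            (shiftN^[ijw.2.1 + 1] ⁻¹' cyl m ijw.2.2)) :=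
        (measureReal_mono (setOf_le_Mstat_subset n m)).trans (measureReal_iUnion_fintype_le _)
    _ = ∑ _ij : Fin (n + 1) × Fin (n + 1), collisionProb μ m := by
        simp only [Fintype.sum_prod_type, measureReal_def, Measure.prod_prod, ENNReal.toReal_mul]
        simp only [← measureReal_def, hpre, collisionProb, sq]
    _ = (n + 1) ^ 2 * collisionProb μ m := by simp [sq]

lemma limsup_div_log_le_of_eventually_le_dyadic {M : ℕ → ℕ} (hM : Monotone M) {α : ℝ}
    (hα : 0 ≤ α) (h : ∀ᶠ s : ℕ in atTop, (M (2 ^ (s + 1)) : ℝ) ≤ α * (s * log 2)) :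
    limsup (fun n : ℕ => (M n : ℝ) / log n) atTop ≤ α := by
  obtain ⟨T, hT⟩ := eventually_atTop.mp h
  refine limsup_le_of_le (isBoundedUnder_of ⟨0, fun n =>
    div_nonneg (Nat.cast_nonneg _) (log_natCast_nonneg n)⟩).isCoboundedUnder_le ?_
  filter_upwards [eventually_ge_atTop (2 ^ T), eventually_ge_atTop 2] with n hTn hn
  set t := Nat.log 2 n
  have hlog_n : 0 < log n := log_pos (by exact_mod_cast hn)
  have hMn : (M n : ℝ) ≤ α * (t * log 2) :=
    le_trans (by exact_mod_cast hM (Nat.lt_pow_succ_log_self one_lt_two n).le)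
      (hT t (Nat.le_log_of_pow_le one_lt_two hTn))
  have ht : t * log 2 ≤ log n := by
    rw [← log_pow]
    exact log_le_log (by positivity) (by exact_mod_cast Nat.pow_log_le_self 2 (by omega))
  rw [div_le_iff₀ hlog_n]
  exact hMn.trans (mul_le_mul_of_nonneg_left ht hα)

lemma ae_eventually_notMem_of_summable_measureReal {α : Type*} [MeasurableSpace α]
    {μ : Measure α} [IsFiniteMeasure μ] {s : ℕ → Set α} (hs : Summable fun n => μ.real (s n)) :
    ∀ᵐ x ∂μ, ∀ᶠ n in atTop, x ∉ s n := by
  refine ae_eventually_notMem ?_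
  have hreal : ∀ n, μ (s n) = ENNReal.ofReal (μ.real (s n)) := fun n =>
    (ofReal_measureReal (measure_ne_top μ _)).symm
  rw [tsum_congr hreal, ← ENNReal.ofReal_tsum_of_nonneg (fun _ => measureReal_nonneg) hs]
  exact ENNReal.ofReal_ne_top

lemma ae_le_of_forall_gt_ae_le {α : Type*} [MeasurableSpace α] {μ : Measure α} {f : α → ℝ}
    {c : ℝ} (h : ∀ a, c < a → ∀ᵐ x ∂μ, f x ≤ a) : ∀ᵐ x ∂μ, f x ≤ c := by
  have hseq : ∀ j : ℕ, ∀ᵐ x ∂μ, f x ≤ c + 1 / (j + 1) := fun j =>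
    h _ (lt_add_of_pos_right c Nat.one_div_pos_of_nat)
  filter_upwards [ae_all_iff.mpr hseq] with x hx
  have hlim : Tendsto (fun j : ℕ => c + 1 / ((j : ℝ) + 1)) atTop (𝓝 c) := by
    simpa using (tendsto_const_nhds (x := c)).add tendsto_one_div_add_atTop_nhds_zero_nat
  exact ge_of_tendsto' hlim hx

section Annealed

variable {N : ℕ} {μ : Measure (ℕ → Fin N)} [IsProbabilityMeasure μ]

lemma ae_limsup_Mstat_div_log_le (hμ : MeasurePreserving shiftN μ μ) (hH : 0 < H2low N μ)
    {α : ℝ} (hα : 2 / H2low N μ < α) :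
    ∀ᵐ p ∂μ.prod μ, limsup (fun n : ℕ => (Mstat p.1 p.2 n : ℝ) / log n) atTop ≤ α := by
  have hα0 : 0 < α := (div_pos two_pos hH).trans hα
  obtain ⟨b, hb2, hbH⟩ := exists_between ((div_lt_comm₀ hH hα0).mp hα)
  have hb0 : 0 < b := (div_pos two_pos hα0).trans hb2
  have hαb : 2 < α * b := by rwa [div_lt_iff₀ hα0, mul_comm] at hb2
  set x : ℕ → ℝ := fun s => α * (s * log 2)
  set ρ := exp ((2 - α * b) * log 2)
  have hρ : ρ < 1 := exp_lt_one_iff.mpr (mul_neg_of_neg_of_pos (by linarith) (log_pos one_lt_two))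
  have hceil : Tendsto (fun s => ⌈x s⌉₊) atTop atTop := tendsto_nat_ceil_atTop.comp
    ((tendsto_natCast_atTop_atTop.atTop_mul_const (log_pos one_lt_two)).const_mul_atTop hα0)
  have hbound : ∀ᶠ s in atTop,
      (μ.prod μ).real {p | ⌈x s⌉₊ ≤ Mstat p.1 p.2 (2 ^ (s + 1))} ≤ 16 * ρ ^ s := by
    filter_upwards [hceil.eventually (collisionProb_eventually_le_exp hbH)] with s hs
    have hpow : ((2 ^ (s + 1) : ℕ) + 1 : ℝ) ^ 2 ≤ (4 * exp (s * log 2)) ^ 2 := by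
      rw [exp_nat_mul, exp_log two_pos]
      have : (1 : ℝ) ≤ 2 ^ s := one_le_pow₀ one_le_two
      gcongr; push_cast; rw [pow_succ]; linarith
    have hexp : exp (-(b * ⌈x s⌉₊)) ≤ exp (-(b * x s)) := by
      gcongr; exact Nat.le_ceil _
    calc (μ.prod μ).real {p | ⌈x s⌉₊ ≤ Mstat p.1 p.2 (2 ^ (s + 1))}
        ≤ ((2 ^ (s + 1) : ℕ) + 1 : ℝ) ^ 2 * collisionProb μ ⌈x s⌉₊ :=
          measureReal_le_Mstat_le hμ _ _
      _ ≤ (4 * exp (s * log 2)) ^ 2 * exp (-(b * x s)) :=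
          mul_le_mul hpow (hs.trans hexp) (collisionProb_nonneg _ _) (by positivity)
      _ = 16 * ρ ^ s := by
          rw [← exp_nat_mul, mul_pow, mul_assoc, ← exp_nat_mul, ← exp_add]
          norm_num [x]; ring
  have hsum : Summable fun s => (μ.prod μ).real {p | ⌈x s⌉₊ ≤ Mstat p.1 p.2 (2 ^ (s + 1))} :=
    .of_norm_bounded_eventually_nat ((summable_geometric_of_lt_one (exp_pos _).le hρ).mul_left 16)
      (hbound.mono fun s hs => by rwa [norm_of_nonneg measureReal_nonneg])
  filter_upwards [ae_eventually_notMem_of_summable_measureReal hsum] with p hp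
  refine limsup_div_log_le_of_eventually_le_dyadic (Mstat_mono p.1 p.2) hα0.le ?_
  filter_upwards [hp] with s hs
  exact (Nat.lt_ceil.mp (not_le.mp hs)).le

lemma ae_limsup_Mstat_div_log_le_two_div (hμ : MeasurePreserving shiftN μ μ)
    (hH : 0 < H2low N μ) :
    ∀ᵐ p ∂μ.prod μ, limsup (fun n : ℕ => (Mstat p.1 p.2 n : ℝ) / log n) atTop ≤ 2 / H2low N μ :=
  ae_le_of_forall_gt_ae_le fun _ hα => ae_limsup_Mstat_div_log_le hμ hH hα

end Annealed

lemma ae_prod_of_ae_prod_map {β γ : Type*} [MeasurableSpace β] [MeasurableSpace γ]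
    {ν : Measure β} [SFinite ν] {f : β → γ} (hf : Measurable f) {P : γ × γ → Prop}
    (h : ∀ᵐ p ∂(ν.map f).prod (ν.map f), P p) : ∀ᵐ q ∂ν.prod ν, P (f q.1, f q.2) :=
  ae_of_ae_map (hf.prodMap hf).aemeasurable (by rwa [← Measure.map_prod_map _ _ hf hf])

theorem annealed_upper_bound_general
    {Ω : Type*} [MeasurableSpace Ω] {N : ℕ}
    (P : Measure Ω) [IsProbabilityMeasure P]
    (θ : Ω ≃ᵐ Ω)
    (κ : Kernel Ω (ℕ → Fin N)) [IsMarkovKernel κ]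
    (hSinv : (P ⊗ₘ κ).map (fun p : Ω × (ℕ → Fin N) => (θ p.1, shiftN p.2)) = P ⊗ₘ κ)
    (μ : Measure (ℕ → Fin N)) (hμ : μ = (P ⊗ₘ κ).map Prod.snd)
    (hpos : 0 < H2low N μ) :
    ∀ᵐ q ∂(P ⊗ₘ κ).prod (P ⊗ₘ κ),
      limsup (fun n : ℕ => (Mstat q.1.2 q.2.2 n : ℝ) / Real.log n) atTop ≤ 2 / H2low N μ := by
  subst hμ
  have hS : MeasurePreserving (fun p : Ω × (ℕ → Fin N) => (θ p.1, shiftN p.2)) (P ⊗ₘ κ) (P ⊗ₘ κ) :=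
    ⟨(θ.measurable.comp measurable_fst).prodMk (measurable_shiftN.comp measurable_snd), hSinv⟩
  have : IsProbabilityMeasure ((P ⊗ₘ κ).map Prod.snd) :=
    Measure.isProbabilityMeasure_map measurable_snd.aemeasurable
  have hshift : MeasurePreserving shiftN ((P ⊗ₘ κ).map Prod.snd) ((P ⊗ₘ κ).map Prod.snd) :=
    .of_semiconj ⟨measurable_snd, rfl⟩ hS (fun _ => rfl) measurable_shiftN
  exact ae_prod_of_ae_prod_map measurable_snd (ae_limsup_Mstat_div_log_le_two_div hshift hpos)

/-- Annealed upper bound: if `0 < H̲₂(μ)`, then for `ν⊗ν`-a.e. pair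
`((ω,x),(ω̃,y))`, `limsup_n M_n(x,y)/log n ≤ 2/H̲₂(μ)`, where `ν = ℙ ⊗ₘ κ` is an `S`-invariant
probability measure with marginal `ℙ` and disintegration `(μ_ω) = κ`, and
`μ = ∫ μ_ω dℙ` is the marginal of `ν` on `X`. -/
theorem annealed_upper_bound
    {Ω : Type*} [MeasurableSpace Ω] {N : ℕ}
    (P : Measure Ω) [IsProbabilityMeasure P]
    (θ : Ω ≃ᵐ Ω) (hθ : Ergodic θ P)
    (κ : Kernel Ω (ℕ → Fin N)) [IsMarkovKernel κ]
    (hSinv : (P ⊗ₘ κ).map (fun p : Ω × (ℕ → Fin N) => (θ p.1, shiftN p.2)) = P ⊗ₘ κ)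
    (μ : Measure (ℕ → Fin N)) (hμ : μ = (P ⊗ₘ κ).map Prod.snd)
    (hpos : 0 < H2low N μ) :
    ∀ᵐ q ∂(P ⊗ₘ κ).prod (P ⊗ₘ κ),
      limsup (fun n : ℕ => (Mstat q.1.2 q.2.2 n : ℝ) / Real.log n) atTop ≤ 2 / H2low N μ :=
  annealed_upper_bound_general P θ κ hSinv μ hμ hpos
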